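/- Let α₀ ∈ (0,1) be irrational and β₀ ∈ [−1, α₀), with the Ostrowski data (α_n, a_n, β_n, b_n, α^{(n)}, x^{(n)}) defined by the recursions in the context. Then for every n ≥ 0, |β₀ − Σ_{k=0}^{n} x^{(k)}| = α^{(n)}·|β_{n+1}|, and consequently the series Σ_{n=0}^{∞} x^{(n)} converges to β₀. -/

import Mathlib

open scoped BigOperators

/-- The Gauss map `G(x) = 1/x − ⌊1/x⌋`. -/
noncomputable def gaussMap (x : ℝ) : ℝ := 1 / x - ⌊1 / x⌋

/-- `α_n = Gⁿ(α₀)`. -/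
noncomputable def alphaSeq (α₀ : ℝ) (n : ℕ) : ℝ := gaussMap^[n] α₀

/-- `a_n = ⌊1/α_n⌋`. -/
noncomputable def aSeq (α₀ : ℝ) (n : ℕ) : ℤ := ⌊1 / alphaSeq α₀ n⌋

/-- The sequence `β_n` of the Ostrowski algorithm: `β₀` is given, and
if `β_n ∈ [−1, −1 + a_n·α_n)` then `β_{n+1} = −{(β_n+1)/α_n}`, while otherwise
(i.e. if `β_n ∈ [−1 + a_n·α_n, α_n)`) `β_{n+1} = −β_n/α_n`. -/
noncomputable def betaSeq (α₀ β₀ : ℝ) : ℕ → ℝ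
  | 0 => β₀
  | n + 1 =>
      if betaSeq α₀ β₀ n < -1 + (aSeq α₀ n : ℝ) * alphaSeq α₀ n then
        -((betaSeq α₀ β₀ n + 1) / alphaSeq α₀ n - ⌊(betaSeq α₀ β₀ n + 1) / alphaSeq α₀ n⌋)
      else -(betaSeq α₀ β₀ n / alphaSeq α₀ n)

/-- The Ostrowski digits `b_n`: `b_n = ⌊(1+β_n)/α_n⌋ + 1` if `β_n ∈ [−1, −1 + a_n·α_n)`
and `b_n = 0` otherwise. -/
noncomputable def bSeq (α₀ β₀ : ℝ) (n : ℕ) : ℤ :=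
  if betaSeq α₀ β₀ n < -1 + (aSeq α₀ n : ℝ) * alphaSeq α₀ n then
    ⌊(1 + betaSeq α₀ β₀ n) / alphaSeq α₀ n⌋ + 1
  else 0

/-- `alphaProd α₀ n = α^{(n−1)} = α₀·α₁·⋯·α_{n−1}` (so `alphaProd α₀ 0 = α^{(−1)} = 1`
and `α^{(n)} = alphaProd α₀ (n+1)`). -/
noncomputable def alphaProd (α₀ : ℝ) (n : ℕ) : ℝ := ∏ k ∈ Finset.range n, alphaSeq α₀ k

/-- The Ostrowski summands `x^{(n)} = (−1)ⁿ·α^{(n−1)}·(−1 + (b_n−1)·α_n)` if `b_n ≥ 1`,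
and `x^{(n)} = 0` if `b_n = 0`. -/
noncomputable def xSeq (α₀ β₀ : ℝ) (n : ℕ) : ℝ :=
  if 1 ≤ bSeq α₀ β₀ n then
    (-1 : ℝ) ^ n * alphaProd α₀ n * (-1 + ((bSeq α₀ β₀ n : ℝ) - 1) * alphaSeq α₀ n)
  else 0

/-!
Each step peels off one digit: `β_n = c_n − α_n·β_{n+1}` where `x^{(n)} = (−1)ⁿ·α^{(n−1)}·c_n`,
so `β₀ − Σ_{k<n} x^{(k)} = (−1)ⁿ·α^{(n−1)}·β_n` telescopes. The remainders stay in `[−1, α_n]`,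
and `α_n·α_{n+1} < 1/2` forces `α^{(n)} → 0`.
-/

open Filter Topology

lemma gaussMap_eq_fract (x : ℝ) : gaussMap x = Int.fract (1 / x) := rfl

lemma Irrational.gaussMap {x : ℝ} (hx : Irrational x) : Irrational (gaussMap x) := by
  rw [gaussMap_eq_fract, one_div]
  exact hx.inv.sub_intCast _

lemma gaussMap_mem_Ioo {x : ℝ} (hx : Irrational x) : gaussMap x ∈ Set.Ioo 0 1 :=
  ⟨(Int.fract_nonneg _).lt_of_ne' hx.gaussMap.ne_zero, Int.fract_lt_one _⟩

lemma mul_gaussMap_lt_half {x : ℝ} (hx0 : 0 < x) (hx1 : x < 1) : x * gaussMap x < 1 / 2 := by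
  have hG0 : 0 ≤ gaussMap x := Int.fract_nonneg _
  have hG1 : gaussMap x < 1 := Int.fract_lt_one _
  rcases le_or_gt x (1 / 2) with hx | hx
  · nlinarith
  · have hfloor : ⌊1 / x⌋ = 1 := by
      rw [Int.floor_eq_iff, le_div_iff₀ hx0, div_lt_iff₀ hx0]
      constructor <;> push_cast <;> linarith
    have hmul : x * gaussMap x = 1 - x := by
      rw [gaussMap, hfloor]
      field_simp
      ring
    linarith

noncomputable def ostrowskiStep (α β : ℝ) : ℝ :=
  if β < -1 + ⌊1 / α⌋ * α then -Int.fract ((β + 1) / α) else -(β / α)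

lemma ostrowskiStep_mem_Icc {α β : ℝ} (hα : 0 < α) (hβ : β ∈ Set.Icc (-1) α) :
    ostrowskiStep α β ∈ Set.Icc (-1) (gaussMap α) := by
  unfold ostrowskiStep
  split_ifs with h
  · rw [gaussMap_eq_fract]
    exact ⟨by linarith [Int.fract_lt_one ((β + 1) / α)],
      by linarith [Int.fract_nonneg ((β + 1) / α), Int.fract_nonneg (1 / α)]⟩
  · have hG : gaussMap α * α = 1 - ⌊1 / α⌋ * α := by
      rw [gaussMap]
      field_simp
    refine ⟨?_, ?_⟩
    · rw [neg_le_neg_iff, div_le_one hα]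
      exact hβ.2
    · rw [neg_le, le_div_iff₀ hα]
      linarith

lemma alphaSeq_succ (α₀ : ℝ) (n : ℕ) : alphaSeq α₀ (n + 1) = gaussMap (alphaSeq α₀ n) :=
  Function.iterate_succ_apply' gaussMap n α₀

lemma betaSeq_succ (α₀ β₀ : ℝ) (n : ℕ) :
    betaSeq α₀ β₀ (n + 1) = ostrowskiStep (alphaSeq α₀ n) (betaSeq α₀ β₀ n) := rfl

lemma irrational_alphaSeq {α₀ : ℝ} (hirr : Irrational α₀) (n : ℕ) : Irrational (alphaSeq α₀ n) := by
  induction n with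
  | zero => exact hirr
  | succ n ih => rw [alphaSeq_succ]; exact ih.gaussMap

lemma alphaSeq_mem_Ioo {α₀ : ℝ} (hα : α₀ ∈ Set.Ioo 0 1) (hirr : Irrational α₀) (n : ℕ) :
    alphaSeq α₀ n ∈ Set.Ioo 0 1 := by
  cases n with
  | zero => exact hα
  | succ n => rw [alphaSeq_succ]; exact gaussMap_mem_Ioo (irrational_alphaSeq hirr n)

lemma betaSeq_mem_Icc {α₀ β₀ : ℝ} (hα : α₀ ∈ Set.Ioo 0 1) (hirr : Irrational α₀)
    (hβ : β₀ ∈ Set.Ico (-1) α₀) (n : ℕ) : betaSeq α₀ β₀ n ∈ Set.Icc (-1) (alphaSeq α₀ n) := by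
  induction n with
  | zero => exact Set.Ico_subset_Icc_self hβ
  | succ n ih =>
    rw [betaSeq_succ, alphaSeq_succ]
    exact ostrowskiStep_mem_Icc (alphaSeq_mem_Ioo hα hirr n).1 ih

lemma alphaProd_succ (α₀ : ℝ) (n : ℕ) :
    alphaProd α₀ (n + 1) = alphaProd α₀ n * alphaSeq α₀ n :=
  Finset.prod_range_succ _ _

lemma xSeq_eq {α₀ β₀ : ℝ} {n : ℕ} (hα : 0 < alphaSeq α₀ n) (hβ : -1 ≤ betaSeq α₀ β₀ n) :
    xSeq α₀ β₀ n = (-1) ^ n * alphaProd α₀ n *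
      (betaSeq α₀ β₀ n + alphaSeq α₀ n * betaSeq α₀ β₀ (n + 1)) := by
  rw [betaSeq_succ, ostrowskiStep]
  set α := alphaSeq α₀ n
  set β := betaSeq α₀ β₀ n
  by_cases h : β < -1 + ⌊1 / α⌋ * α
  · have hb : bSeq α₀ β₀ n = ⌊(1 + β) / α⌋ + 1 := if_pos h
    have hb1 : 1 ≤ bSeq α₀ β₀ n := by
      rw [hb, le_add_iff_nonneg_left, Int.floor_nonneg]
      exact div_nonneg (by linarith) hα.le
    rw [xSeq, if_pos hb1, hb, if_pos h, Int.fract, add_comm 1 β]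
    push_cast
    field_simp
    ring
  · have hb : bSeq α₀ β₀ n = 0 := if_neg h
    rw [xSeq, hb, if_neg h]
    field_simp
    simp

lemma sub_sum_xSeq_eq {α₀ β₀ : ℝ} (hα : α₀ ∈ Set.Ioo 0 1) (hirr : Irrational α₀)
    (hβ : β₀ ∈ Set.Ico (-1) α₀) (n : ℕ) :
    β₀ - ∑ k ∈ Finset.range n, xSeq α₀ β₀ k = (-1) ^ n * alphaProd α₀ n * betaSeq α₀ β₀ n := by
  induction n with
  | zero => simp [alphaProd, betaSeq]
  | succ n ih =>
    rw [Finset.sum_range_succ, ← sub_sub, ih,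
      xSeq_eq (alphaSeq_mem_Ioo hα hirr n).1 (betaSeq_mem_Icc hα hirr hβ n).1,
      alphaProd_succ, pow_succ]
    ring

lemma alphaProd_pos {α₀ : ℝ} (hα : α₀ ∈ Set.Ioo 0 1) (hirr : Irrational α₀) (n : ℕ) :
    0 < alphaProd α₀ n :=
  Finset.prod_pos fun k _ => (alphaSeq_mem_Ioo hα hirr k).1

lemma alphaProd_antitone {α₀ : ℝ} (hα : α₀ ∈ Set.Ioo 0 1) (hirr : Irrational α₀) :
    Antitone (alphaProd α₀) :=
  antitone_nat_of_succ_le fun n => by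
    rw [alphaProd_succ]
    exact mul_le_of_le_one_right (alphaProd_pos hα hirr n).le (alphaSeq_mem_Ioo hα hirr n).2.le

lemma alphaProd_add_two_le {α₀ : ℝ} (hα : α₀ ∈ Set.Ioo 0 1) (hirr : Irrational α₀) (n : ℕ) :
    alphaProd α₀ (n + 2) ≤ alphaProd α₀ n / 2 := by
  obtain ⟨h0, h1⟩ := alphaSeq_mem_Ioo hα hirr n
  have hpair := mul_gaussMap_lt_half h0 h1
  rw [← alphaSeq_succ] at hpair
  rw [alphaProd_succ, alphaProd_succ, mul_assoc]
  nlinarith [alphaProd_pos hα hirr n]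

lemma tendsto_zero_of_antitone_of_le_half {u : ℕ → ℝ} (h0 : ∀ n, 0 ≤ u n) (hu : Antitone u)
    (hhalf : ∀ n, u (n + 2) ≤ u n / 2) : Tendsto u atTop (𝓝 0) := by
  have hL : Tendsto u atTop (𝓝 (⨅ n, u n)) := tendsto_atTop_ciInf hu ⟨0, by
    rintro _ ⟨n, rfl⟩
    exact h0 n⟩
  have hL0 : 0 ≤ ⨅ n, u n := ge_of_tendsto' hL h0
  have hLhalf : (⨅ n, u n) ≤ (⨅ n, u n) / 2 :=
    le_of_tendsto_of_tendsto' (hL.comp (tendsto_add_atTop_nat 2)) (hL.div_const 2) hhalf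
  convert hL using 2
  linarith

theorem stmt2 (α₀ β₀ : ℝ) (hα : α₀ ∈ Set.Ioo (0 : ℝ) 1) (hirr : Irrational α₀)
    (hβ : β₀ ∈ Set.Ico (-1 : ℝ) α₀) :
    (∀ n : ℕ,
      |β₀ - ∑ k ∈ Finset.range (n + 1), xSeq α₀ β₀ k| =
        alphaProd α₀ (n + 1) * |betaSeq α₀ β₀ (n + 1)|) ∧
    Filter.Tendsto (fun n : ℕ => ∑ k ∈ Finset.range (n + 1), xSeq α₀ β₀ k)
      Filter.atTop (nhds β₀) := by
  have herror (n : ℕ) : |β₀ - ∑ k ∈ Finset.range n, xSeq α₀ β₀ k| =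
      alphaProd α₀ n * |betaSeq α₀ β₀ n| := by
    rw [sub_sum_xSeq_eq hα hirr hβ, abs_mul, abs_mul, abs_neg_one_pow, one_mul,
      abs_of_pos (alphaProd_pos hα hirr n)]
  refine ⟨fun n => herror (n + 1), ?_⟩
  have hle (n : ℕ) : |β₀ - ∑ k ∈ Finset.range n, xSeq α₀ β₀ k| ≤ alphaProd α₀ n := by
    obtain ⟨hlo, hhi⟩ := betaSeq_mem_Icc hα hirr hβ n
    rw [herror]
    refine mul_le_of_le_one_right (alphaProd_pos hα hirr n).le (abs_le.mpr ⟨hlo, ?_⟩)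
    linarith [(alphaSeq_mem_Ioo hα hirr n).2]
  have hprod : Tendsto (alphaProd α₀) atTop (𝓝 0) :=
    tendsto_zero_of_antitone_of_le_half (fun n => (alphaProd_pos hα hirr n).le)
      (alphaProd_antitone hα hirr) (alphaProd_add_two_le hα hirr)
  have hsum : Tendsto (fun n => ∑ k ∈ Finset.range n, xSeq α₀ β₀ k) atTop (𝓝 β₀) := by
    rw [tendsto_iff_norm_sub_tendsto_zero]
    refine squeeze_zero (fun _ => norm_nonneg _) (fun n => ?_) hprod
    rw [Real.norm_eq_abs, abs_sub_comm]
    exact hle n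
  exact hsum.comp (tendsto_add_atTop_nat 1)
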